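/- arXiv:0810.0638 — 2 statements merged into one kernel-verified Lean document; each statement's English description precedes it below -/
import Mathlib

section
/- Let B be a (possibly non-unital) ring, J ⊆ B a two-sided ideal, and A a ring with unit. Then any surjective ring homomorphism φ : J → A extends uniquely to a ring homomorphism φ̃ : B → A. -/
/-!
Pick `θ ∈ J` with `φ θ = 1` and set `φ̃ b = φ (θ * b)`. Since `θ` is a two-sided unit for `φ`,
`φ (θ * b) = φ (θ * b * θ) = φ (b * θ)`; moving `θ` across `b` in this way gives
`φ (θ * b * c) = φ (θ * b * c * θ) = φ (θ * b) * φ (c * θ) = φ̃ b * φ̃ c`. Any extension `ψ`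
satisfies `ψ b = ψ θ * ψ b = ψ (θ * b)`, hence is `φ̃`.
-/

section MapEqOne

variable {F M N : Type*} [Mul M] [MulOneClass N] [FunLike F M N] [MulHomClass F M N]

theorem map_mul_of_map_eq_one_left (f : F) {e : M} (he : f e = 1) (x : M) :
    f (e * x) = f x := by
  rw [map_mul, he, one_mul]

theorem map_mul_of_map_eq_one_right (f : F) {e : M} (he : f e = 1) (x : M) :
    f (x * e) = f x := by
  rw [map_mul, he, mul_one]

end MapEqOne

namespace NonUnitalRingHom

variable {B A : Type*} [NonUnitalRing B] [Ring A] {J : NonUnitalSubring B}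

theorem map_mul_left_eq_map_mul_right (φ : J →ₙ+* A) {θ : J} (hθ : φ θ = 1)
    (hl : ∀ b : B, (θ : B) * b ∈ J) (hr : ∀ b : B, b * (θ : B) ∈ J) (b : B) :
    φ ⟨θ * b, hl b⟩ = φ ⟨b * θ, hr b⟩ :=
  calc φ ⟨θ * b, hl b⟩ = φ (⟨θ * b, hl b⟩ * θ) := (map_mul_of_map_eq_one_right φ hθ _).symm
    _ = φ (θ * ⟨b * θ, hr b⟩) := congrArg φ (Subtype.ext (mul_assoc _ _ _))
    _ = φ ⟨b * θ, hr b⟩ := map_mul_of_map_eq_one_left φ hθ _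

def extendOfMapEqOne (φ : J →ₙ+* A) {θ : J} (hθ : φ θ = 1)
    (hl : ∀ b : B, (θ : B) * b ∈ J) (hr : ∀ b : B, b * (θ : B) ∈ J) : B →ₙ+* A where
  toFun b := φ ⟨θ * b, hl b⟩
  map_zero' := by
    rw [show (⟨θ * 0, hl 0⟩ : J) = 0 from Subtype.ext (mul_zero _), map_zero]
  map_add' b c := by
    rw [show (⟨θ * (b + c), hl _⟩ : J) = ⟨θ * b, hl b⟩ + ⟨θ * c, hl c⟩ from
      Subtype.ext (mul_add _ _ _), map_add]
  map_mul' b c :=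
    calc φ ⟨θ * (b * c), hl _⟩ = φ (⟨θ * (b * c), hl _⟩ * θ) :=
          (map_mul_of_map_eq_one_right φ hθ _).symm
      _ = φ (⟨θ * b, hl b⟩ * ⟨c * θ, hr c⟩) :=
          congrArg φ (Subtype.ext (by simp only [NonUnitalSubring.val_mul, mul_assoc]))
      _ = φ ⟨θ * b, hl b⟩ * φ ⟨θ * c, hl c⟩ := by
          rw [map_mul, map_mul_left_eq_map_mul_right φ hθ hl hr c]

theorem extendOfMapEqOne_coe (φ : J →ₙ+* A) {θ : J} (hθ : φ θ = 1)
    (hl : ∀ b : B, (θ : B) * b ∈ J) (hr : ∀ b : B, b * (θ : B) ∈ J) (j : J) :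
    φ.extendOfMapEqOne hθ hl hr j = φ j :=
  map_mul_of_map_eq_one_left φ hθ j

theorem eq_extendOfMapEqOne (φ : J →ₙ+* A) {θ : J} (hθ : φ θ = 1)
    (hl : ∀ b : B, (θ : B) * b ∈ J) (hr : ∀ b : B, b * (θ : B) ∈ J) (ψ : B →ₙ+* A)
    (hψ : ∀ j : J, ψ j = φ j) : ψ = φ.extendOfMapEqOne hθ hl hr := by
  ext b
  change ψ b = φ ⟨θ * b, hl b⟩
  rw [← hψ, ← map_mul_of_map_eq_one_left ψ (e := (θ : B)) (by rw [hψ, hθ])]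

end NonUnitalRingHom

/-- Let `B` be a (possibly non-unital) ring, `J ⊆ B` a two-sided ideal,
and `A` a ring with unit. Then any surjective ring homomorphism `φ : J → A` extends
uniquely to a ring homomorphism `φ̃ : B → A`. -/
theorem extend_surjective_hom_of_ideal
    {B : Type*} [NonUnitalRing B] {A : Type*} [Ring A]
    (J : NonUnitalSubring B)
    (hJ : ∀ b x : B, x ∈ J → b * x ∈ J ∧ x * b ∈ J)
    (φ : J →ₙ+* A) (hφ : Function.Surjective φ) :
    ∃! ψ : B →ₙ+* A, ∀ j : J, ψ (j : B) = φ j := by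
  obtain ⟨θ, hθ⟩ := hφ 1
  have hl : ∀ b : B, (θ : B) * b ∈ J := fun b => (hJ b θ θ.2).2
  have hr : ∀ b : B, b * (θ : B) ∈ J := fun b => (hJ b θ θ.2).1
  exact ⟨φ.extendOfMapEqOne hθ hl hr, φ.extendOfMapEqOne_coe hθ hl hr,
    fun ψ hψ => φ.eq_extendOfMapEqOne hθ hl hr ψ hψ⟩
end

section
/- Grade ℂ[X,Y] by declaring a monomial XᵐYⁿ even or odd according to the parity of m+n, and grade M₂(ℂ[X]) by letting (M₂(ℂ[X]))₀ consist of matrices with even polynomials on the diagonal and odd polynomials off the diagonal. Then the even part of the ℤ/2ℤ-graded tensor product M₂(ℂ[X]) ⊗ M₂(ℂ[Y]) is isomorphic as a ℂ-algebra to M₄(ℂ[X,Y])₀, where M₄(ℂ[X,Y])₀ consists of 4×4 matrices whose 2×2 diagonal blocks have entries in ℂ[X,Y]₀ (even polynomials) and whose 2×2 off-diagonal blocks have entries in ℂ[X,Y]₁ (odd polynomials). -/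
open MvPolynomial

/-- Conjugation `x ↦ D x D` by a square root of one, as an algebra homomorphism
(note `D⁻¹ = D`). -/
def conjAlgHom {R A : Type*} [CommSemiring R] [Ring A] [Algebra R A]
    (D : A) (hD : D * D = 1) : A →ₐ[R] A where
  toFun x := D * x * D
  map_one' := by show D * 1 * D = 1; rw [mul_one, hD]
  map_mul' x y := by
    simp only [mul_assoc]
    rw [← mul_assoc D D, hD, one_mul]
  map_zero' := by simp
  map_add' x y := by simp [mul_add, add_mul]
  commutes' r := by
    show D * algebraMap R A r * D = algebraMap R A r
    rw [← Algebra.commutes r D, mul_assoc, hD, mul_one]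

/-- `D = diag(1,−1)` in `M₂(ℂ[X])`. -/
noncomputable def D2 : Matrix (Fin 2) (Fin 2) (Polynomial ℂ) :=
  Matrix.diagonal ![1, -1]

theorem D2_sq : D2 * D2 = 1 := by
  rw [D2, Matrix.diagonal_mul_diagonal]
  have h : (fun i => ![(1 : Polynomial ℂ), -1] i * ![(1 : Polynomial ℂ), -1] i)
      = fun _ => (1 : Polynomial ℂ) := by
    funext i; fin_cases i <;> norm_num
  rw [h, Matrix.diagonal_one]

/-- The grading involution of `M₂(ℂ[X])`: `P(X) ↦ D · P(−X) · D⁻¹` with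
`D = diag(1,−1)`.  Its fixed algebra is `(M₂(ℂ[X]))₀`: even polynomials on the
diagonal and odd polynomials off the diagonal. -/
noncomputable def epsOne : Matrix (Fin 2) (Fin 2) (Polynomial ℂ) →ₐ[ℂ]
    Matrix (Fin 2) (Fin 2) (Polynomial ℂ) :=
  (conjAlgHom D2 D2_sq).comp
    (AlgHom.mapMatrix (Polynomial.aeval (-(Polynomial.X : Polynomial ℂ))))

/-- `D₄ = diag(1,1,−1,−1)` in `M₄(ℂ[X,Y])`. -/
noncomputable def D4 : Matrix (Fin 4) (Fin 4) (MvPolynomial (Fin 2) ℂ) :=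
  Matrix.diagonal ![1, 1, -1, -1]

theorem D4_sq : D4 * D4 = 1 := by
  rw [D4, Matrix.diagonal_mul_diagonal]
  have h : (fun i => ![(1 : MvPolynomial (Fin 2) ℂ), 1, -1, -1] i *
        ![(1 : MvPolynomial (Fin 2) ℂ), 1, -1, -1] i)
      = fun _ => (1 : MvPolynomial (Fin 2) ℂ) := by
    funext i; fin_cases i <;> norm_num
  rw [h, Matrix.diagonal_one]

/-- The grading involution of `M₄(ℂ[X,Y])`: `P(X,Y) ↦ D₄ · P(−X,−Y) · D₄⁻¹`.  Its
fixed algebra is `M₄(ℂ[X,Y])₀`: even polynomials in the two diagonal `2×2` blocks,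
odd polynomials in the two off-diagonal `2×2` blocks. -/
noncomputable def epsFour : Matrix (Fin 4) (Fin 4) (MvPolynomial (Fin 2) ℂ) →ₐ[ℂ]
    Matrix (Fin 4) (Fin 4) (MvPolynomial (Fin 2) ℂ) :=
  (conjAlgHom D4 D4_sq).comp
    (AlgHom.mapMatrix (MvPolynomial.aeval (fun i => -(MvPolynomial.X i))))

/-!
The Kronecker product identifies `M₂(ℂ[X]) ⊗ M₂(ℂ[Y])` with
`M₄(ℂ[X] ⊗ ℂ[Y]) = M₄(ℂ[X,Y])`.
Each grading involution is a substitution of `−X` (resp. `−X, −Y`) in the entries followed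
by conjugation with a diagonal sign matrix. The tensor square of the substitution `X ↦ −X` is
the substitution `(X, Y) ↦ (−X, −Y)`, and `diag(1,−1) ⊗ diag(1,−1)` becomes
`diag(1,1,−1,−1)` once the indices are ordered by parity. Hence the isomorphism intertwines
`ε₁ ⊗ ε₁` with `ε₄`, and so restricts to an isomorphism of the fixed subalgebras.
-/

open Matrix TensorProduct

section conjugation

variable {R A B : Type*} [CommSemiring R] [Ring A] [Ring B] [Algebra R A] [Algebra R B]

@[simp]
theorem conjAlgHom_apply (D : A) (hD : D * D = 1) (x : A) :
    conjAlgHom (R := R) D hD x = D * x * D :=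
  rfl

theorem AlgHom.comp_conjAlgHom (φ : A →ₐ[R] B) (D : A) (hD : D * D = 1) :
    φ.comp (conjAlgHom D hD) =
      (conjAlgHom (φ D) (by rw [← map_mul, hD, map_one])).comp φ :=
  AlgHom.ext fun x => by simp only [AlgHom.comp_apply, conjAlgHom_apply, map_mul]

theorem Algebra.TensorProduct.map_conjAlgHom (D : A) (hD : D * D = 1) (D' : B)
    (hD' : D' * D' = 1) :
    Algebra.TensorProduct.map (conjAlgHom (R := R) D hD) (conjAlgHom D' hD') =
      conjAlgHom (D ⊗ₜ[R] D') (by rw [Algebra.TensorProduct.tmul_mul_tmul, hD, hD']; rfl) :=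
  Algebra.TensorProduct.ext' fun x y => by
    simp only [Algebra.TensorProduct.map_tmul, conjAlgHom_apply,
      Algebra.TensorProduct.tmul_mul_tmul]

end conjugation

noncomputable def AlgEquiv.equalizerIdCongr {R A B : Type*} [CommSemiring R] [Semiring A]
    [Semiring B] [Algebra R A] [Algebra R B] (e : A ≃ₐ[R] B) {f : A →ₐ[R] A}
    {g : B →ₐ[R] B}
    (h : g.comp e = (e : A →ₐ[R] B).comp f) :
    AlgHom.equalizer f (AlgHom.id R A) ≃ₐ[R] AlgHom.equalizer g (AlgHom.id R B) :=
  (e.subalgebraMap _).trans <| Subalgebra.equivOfEq _ _ <| by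
    ext y
    obtain ⟨x, rfl⟩ := e.surjective y
    have hx := AlgHom.congr_fun h x
    simp only [AlgHom.coe_comp, AlgEquiv.coe_toAlgHom, Function.comp_apply] at hx
    simp only [Subalgebra.mem_map, AlgHom.mem_equalizer, AlgHom.coe_id, id_eq,
      AlgEquiv.coe_toAlgHom, EmbeddingLike.apply_eq_iff_eq, exists_eq_right, hx]

section polynomial

variable (R : Type*) [CommRing R]

noncomputable def polynomialTensorEquivMvPolynomial :
    Polynomial R ⊗[R] Polynomial R ≃ₐ[R] MvPolynomial (Fin 2) R :=
  AlgEquiv.ofAlgHom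
    (Algebra.TensorProduct.lift (Polynomial.aeval (X 0)) (Polynomial.aeval (X 1))
      fun _ _ => Commute.all _ _)
    (aeval ![Polynomial.X ⊗ₜ 1, 1 ⊗ₜ Polynomial.X])
    (MvPolynomial.algHom_ext fun i => by fin_cases i <;> simp)
    (Algebra.TensorProduct.ext (Polynomial.algHom_ext (by simp))
      (Polynomial.algHom_ext (by simp)))

variable {R}

@[simp]
theorem polynomialTensorEquivMvPolynomial_tmul (p q : Polynomial R) :
    polynomialTensorEquivMvPolynomial R (p ⊗ₜ q) =
      Polynomial.aeval (X 0) p * Polynomial.aeval (X 1) q := by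
  simp [polynomialTensorEquivMvPolynomial]

theorem polynomialTensorEquivMvPolynomial_comp_map_aeval_neg :
    (polynomialTensorEquivMvPolynomial R).toAlgHom.comp
        (Algebra.TensorProduct.map (Polynomial.aeval (-Polynomial.X))
          (Polynomial.aeval (-Polynomial.X))) =
      (aeval fun i => -X i).comp (polynomialTensorEquivMvPolynomial R).toAlgHom :=
  Algebra.TensorProduct.ext (Polynomial.algHom_ext (by simp)) (Polynomial.algHom_ext (by simp))

end polynomial

/-- Indices are ordered by parity, so that the sign of `D4` at `(i, k)` is the product of the
signs of `D2` at `i` and at `k`. -/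
def finTwoProdFinTwoEquiv : Fin 2 × Fin 2 ≃ Fin 4 where
  toFun p := ![![0, 2], ![3, 1]] p.1 p.2
  invFun k := ![(0, 0), (1, 1), (0, 1), (1, 0)] k
  left_inv := by decide
  right_inv := by decide

section matrix

variable (R : Type*) [CommRing R]

noncomputable def matrixPolynomialTensorEquiv :
    Matrix (Fin 2) (Fin 2) (Polynomial R) ⊗[R] Matrix (Fin 2) (Fin 2) (Polynomial R) ≃ₐ[R]
      Matrix (Fin 4) (Fin 4) (MvPolynomial (Fin 2) R) :=
  (kroneckerTMulAlgEquiv (Fin 2) (Fin 2) R R (Polynomial R) (Polynomial R)).trans <|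
    (polynomialTensorEquivMvPolynomial R).mapMatrix.trans <|
      reindexAlgEquiv R _ finTwoProdFinTwoEquiv

variable {R}

theorem matrixPolynomialTensorEquiv_tmul_apply (M N : Matrix (Fin 2) (Fin 2) (Polynomial R))
    (a b : Fin 4) :
    matrixPolynomialTensorEquiv R (M ⊗ₜ N) a b =
      polynomialTensorEquivMvPolynomial R
        (M (finTwoProdFinTwoEquiv.symm a).1 (finTwoProdFinTwoEquiv.symm b).1 ⊗ₜ
          N (finTwoProdFinTwoEquiv.symm a).2 (finTwoProdFinTwoEquiv.symm b).2) :=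
  rfl

theorem matrixPolynomialTensorEquiv_comp_map_mapMatrix :
    (matrixPolynomialTensorEquiv R).toAlgHom.comp
        (Algebra.TensorProduct.map (Polynomial.aeval (-Polynomial.X)).mapMatrix
          (Polynomial.aeval (-Polynomial.X)).mapMatrix) =
      (aeval fun i => -X i).mapMatrix.comp (matrixPolynomialTensorEquiv R).toAlgHom :=
  Algebra.TensorProduct.ext' fun M N => Matrix.ext fun a b =>
      AlgHom.congr_fun polynomialTensorEquivMvPolynomial_comp_map_aeval_neg
        (M (finTwoProdFinTwoEquiv.symm a).1 (finTwoProdFinTwoEquiv.symm b).1 ⊗ₜ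
          N (finTwoProdFinTwoEquiv.symm a).2 (finTwoProdFinTwoEquiv.symm b).2)

end matrix

theorem matrixPolynomialTensorEquiv_D2_tmul_D2 :
    matrixPolynomialTensorEquiv ℂ (D2 ⊗ₜ D2) = D4 := by
  ext a b : 1
  rw [matrixPolynomialTensorEquiv_tmul_apply]
  fin_cases a <;> fin_cases b <;> simp [D2, D4, finTwoProdFinTwoEquiv]

theorem epsFour_comp_matrixPolynomialTensorEquiv :
    epsFour.comp (matrixPolynomialTensorEquiv ℂ).toAlgHom =
      (matrixPolynomialTensorEquiv ℂ).toAlgHom.comp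
        (Algebra.TensorProduct.map epsOne epsOne) := by
  rw [epsOne, Algebra.TensorProduct.map_comp, Algebra.TensorProduct.map_conjAlgHom,
    ← AlgHom.comp_assoc, AlgHom.comp_conjAlgHom, AlgHom.comp_assoc,
    matrixPolynomialTensorEquiv_comp_map_mapMatrix, ← AlgHom.comp_assoc, epsFour]
  simp only [AlgEquiv.coe_toAlgHom, matrixPolynomialTensorEquiv_D2_tmul_D2]

/-- The even part of the `ℤ/2ℤ`-graded tensor product
`M₂(ℂ[X]) ⊗ M₂(ℂ[Y])` — realized as the fixed subalgebra of the grading involution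
`ε₁ ⊗ ε₂` — is isomorphic as a `ℂ`-algebra to `M₄(ℂ[X,Y])₀`, the fixed subalgebra of
the grading involution of `M₄(ℂ[X,Y])`, which consists of the `4×4` matrices whose
`2×2` diagonal blocks have even entries and whose `2×2` off-diagonal blocks have odd
entries. -/
theorem even_tensor_iso_even_M4 :
    Nonempty
      (AlgHom.equalizer (Algebra.TensorProduct.map epsOne epsOne) (AlgHom.id ℂ _)
        ≃ₐ[ℂ] AlgHom.equalizer epsFour (AlgHom.id ℂ _)) :=
  ⟨(matrixPolynomialTensorEquiv ℂ).equalizerIdCongr epsFour_comp_matrixPolynomialTensorEquiv⟩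
end
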